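/- Let ρ be a stable relation on a finite set X such that every clasp in X is unlocked, let R be an associative ring with unity, let G be a semigroup, and let Φ : ρ → G be a homomorphism (so that I(X,ρ,R) carries the grading with homogeneous components S_a = {f : f(x,y) ≠ 0 ⇒ Φ(x,y) = a}). Then there exist a preorder ≤ on a finite set Y, a good G-grading of I(Y,≤,R) with components T_a, and an injective ring homomorphism h : I(X,ρ,R) → I(Y,≤,R) with h(S_a) ⊆ T_a for all a ∈ G. -/

import Mathlib

open scoped Classical

universe u v

/-- The interval `[x,y] = {z | x ρ z and z ρ y}` determined by a relation `ρ`. -/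
def RelInterval {X : Type*} (ρ : X → X → Prop) (x y : X) : Set X :=
  {z | ρ x z ∧ ρ z y}

/-- A relation is locally finite if every interval is finite. -/
def RelLocallyFinite {X : Type*} (ρ : X → X → Prop) : Prop :=
  ∀ x y, (RelInterval ρ x y).Finite

/-- A relation is balanced if it is reflexive and whenever
`w ρ x`, `x ρ y`, `y ρ z`, `w ρ z` all hold, `w ρ y ↔ x ρ z`. -/
def RelBalanced {X : Type*} (ρ : X → X → Prop) : Prop :=
  (∀ x, ρ x x) ∧
  ∀ w x y z, ρ w x → ρ x y → ρ y z → ρ w z → (ρ w y ↔ ρ x z)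

/-- The underlying set of the generalized incidence ring `I(X,ρ,R)`:
functions `f : X → X → R` with `f x y ≠ 0 → x ρ y`. -/
def IncFun {X : Type*} (ρ : X → X → Prop) (R : Type*) [Ring R] :
    Set (X → X → R) :=
  {f | ∀ x y, f x y ≠ 0 → ρ x y}

/-- The convolution product on `I(X,ρ,R)`. -/
noncomputable def conv {X R : Type*} [Ring R] (ρ : X → X → Prop)
    (f g : X → X → R) : X → X → R :=
  fun x y => if ρ x y then ∑ᶠ z ∈ RelInterval ρ x y, f x z * g z y else 0

/-- The function `e` with `e x x = 1` and `e x y = 0` for `x ≠ y`. -/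
noncomputable def eId (X R : Type*) [Ring R] : X → X → R :=
  fun x y => if x = y then 1 else 0

/-- The matrix unit `e_{xy}`: value `1` at `(x,y)` and `0` elsewhere. -/
noncomputable def eUnit {X : Type*} (R : Type*) [Ring R] (x y : X) : X → X → R :=
  fun i j => if i = x ∧ j = y then 1 else 0

/-- A homomorphism `Φ : ρ → G`: `Φ x y * Φ y z = Φ x z` on transitive triples. -/
def IsRelHom {X G : Type*} [Mul G] (ρ : X → X → Prop) (Φ : X → X → G) : Prop :=
  ∀ x y z, ρ x y → ρ y z → ρ x z → Φ x y * Φ y z = Φ x z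

/-- The homogeneous component `S_a` induced by `Φ`. -/
def gradeSet {X G : Type*} (R : Type*) [Ring R] (ρ : X → X → Prop)
    (Φ : X → X → G) (a : G) : Set (X → X → R) :=
  {f | (∀ x y, f x y ≠ 0 → ρ x y) ∧ ∀ x y, f x y ≠ 0 → Φ x y = a}

/-- The image `{Φ x y : x ρ y}` of a homomorphism `Φ : ρ → G`. -/
def RelImage {X G : Type*} (ρ : X → X → Prop) (Φ : X → X → G) : Set G :=
  {a | ∃ x y, ρ x y ∧ Φ x y = a}

/-- `θ : X₂ → X₁` is a compression map from `(X₂,ρ₂)` onto `(X₁,ρ₁)`. -/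
structure IsCompression {X₁ X₂ : Type*} (ρ₁ : X₁ → X₁ → Prop)
    (ρ₂ : X₂ → X₂ → Prop) (θ : X₂ → X₁) : Prop where
  surj : Function.Surjective θ
  mono : ∀ x y, ρ₂ x y → ρ₁ (θ x) (θ y)
  lift : ∀ a₁ a₂ a₃, ρ₁ a₁ a₂ → ρ₁ a₂ a₃ → ρ₁ a₁ a₃ →
    ∃ x₁ x₂ x₃, ρ₂ x₁ x₂ ∧ ρ₂ x₂ x₃ ∧ ρ₂ x₁ x₃ ∧
      θ x₁ = a₁ ∧ θ x₂ = a₂ ∧ θ x₃ = a₃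
  bij : Set.BijOn (fun p : X₂ × X₂ => (θ p.1, θ p.2))
    {p | ρ₂ p.1 p.2 ∧ p.1 ≠ p.2} {q | ρ₁ q.1 q.2 ∧ q.1 ≠ q.2}

/-- `σ ⊆ ρ` is a `G`-grading set for `ρ`: every function `φ : σ → G`
extends to a homomorphism `Φ : ρ → G` which is unique on `ρ`. -/
def IsGradingSet (G : Type*) [Mul G] {X : Type*} (ρ : X → X → Prop)
    (σ : Set (X × X)) : Prop :=
  (∀ p ∈ σ, ρ p.1 p.2) ∧
  ∀ φ : X × X → G, ∃ Φ : X → X → G,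
    IsRelHom ρ Φ ∧ (∀ p ∈ σ, Φ p.1 p.2 = φ p) ∧
    ∀ Ψ : X → X → G, IsRelHom ρ Ψ → (∀ p ∈ σ, Ψ p.1 p.2 = φ p) →
      ∀ x y, ρ x y → Ψ x y = Φ x y

/-- The map `h : I(X₁,ρ₁,R) → I(X₂,ρ₂,R)` induced by a compression `θ : X₂ → X₁`. -/
noncomputable def compressMap {X₁ X₂ : Type*} (R : Type*) [Ring R]
    (ρ₂ : X₂ → X₂ → Prop) (θ : X₂ → X₁) (f : X₁ → X₁ → R) : X₂ → X₂ → R :=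
  fun x y => if ρ₂ x y then f (θ x) (θ y) else 0

/-- A transitive triple: `a ρ b`, `b ρ c`, `a ρ c`. -/
def TransTriple {X : Type*} (ρ : X → X → Prop) (a b c : X) : Prop :=
  ρ a b ∧ ρ b c ∧ ρ a c

/-- A stable relation: balanced, and for all pairwise distinct `a,b,c,d`,
`a ρ b`, `a ρ c`, `b ρ c`, `b ρ d`, `c ρ d` imply `a ρ d`. -/
def RelStable {X : Type*} (ρ : X → X → Prop) : Prop :=
  RelBalanced ρ ∧
  ∀ a b c d : X, a ≠ b → a ≠ c → a ≠ d → b ≠ c → b ≠ d → c ≠ d →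
    ρ a b → ρ a c → ρ b c → ρ b d → ρ c d → ρ a d

/-- `x` is a clasp. -/
def IsClasp {X : Type*} (ρ : X → X → Prop) (x : X) : Prop :=
  ∃ w y, w ≠ x ∧ y ≠ x ∧ ρ w x ∧ ρ x y ∧ ¬ ρ w y

/-- `x` is a locked clasp. -/
def IsLockedClasp {X : Type*} (ρ : X → X → Prop) (x : X) : Prop :=
  ∃ u v w y : X, u ≠ x ∧ v ≠ x ∧ w ≠ x ∧ y ≠ x ∧ ¬ ρ w y ∧
    TransTriple ρ u x y ∧ TransTriple ρ u x v ∧ TransTriple ρ w x v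

/-- `A` is a cross-cut for the (pre)order `ρ` on `X`. -/
def IsCrossCut {X : Type*} (ρ : X → X → Prop) (A : Set X) : Prop :=
  (∀ a ∈ A, ∀ b ∈ A, a ≠ b → ¬ ρ a b ∧ ¬ ρ b a) ∧
  (∀ x : X, ∃ a ∈ A, ρ x a ∨ ρ a x) ∧
  (∀ C : Set X, IsChain ρ C → ∃ C', C ⊆ C' ∧ IsChain ρ C' ∧ (A ∩ C').Nonempty)

/-!
Split every point of `X` into copies, one for each way the point is entered or left. The copy
of `b` at the end of an edge `a → b` is labelled by the points `y` completing a strict transitive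
triple `(a, b, y)`; the copy of `a` at the start of `a → b` gets the label of the copies ending at
`a` on edges `w → a` that extend through `a` to `b` (`none` if there are none). Stability makes
these labels constant along transitive triples, and since clasps are unlocked all edges `w → a`
that extend to `b` give the same label. Declaring the two ends of each edge comparable gives a
preorder on the copies. The projection `θ` to `X` is a compression mapping every interval
bijectively onto an interval of `ρ`. Hence `f ↦ f ∘ (θ × θ)`, restricted to the preorder, is an
injective ring homomorphism, and pulling `Φ` back along `θ` gives a good grading for which it is
graded.
-/

section Grading

variable {X G : Type*} (R : Type*) [Ring R] (ρ : X → X → Prop) (Φ : X → X → G)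

def gradeSubgroup (a : G) : AddSubgroup (X → X → R) where
  carrier := gradeSet R ρ Φ a
  zero_mem' := by simp [gradeSet]
  add_mem' := by
    rintro f g ⟨hfρ, hfΦ⟩ ⟨hgρ, hgΦ⟩
    have hsupp : ∀ x y, (f + g) x y ≠ 0 → f x y ≠ 0 ∨ g x y ≠ 0 := fun x y h => by
      by_contra! h'
      simp [h'] at h
    exact ⟨fun x y h => (hsupp x y h).elim (hfρ x y) (hgρ x y),
      fun x y h => (hsupp x y h).elim (hfΦ x y) (hgΦ x y)⟩
  neg_mem' := by
    rintro f ⟨hρ, hΦ⟩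
    exact ⟨fun x y h => hρ x y (neg_ne_zero.mp h), fun x y h => hΦ x y (neg_ne_zero.mp h)⟩

variable {R ρ Φ}

theorem coe_gradeSubgroup_subset_incFun (a : G) :
    (gradeSubgroup R ρ Φ a : Set (X → X → R)) ⊆ IncFun ρ R :=
  fun _ hf => hf.1

theorem apply_eq_ite_of_forall_mem_gradeSet {s : G →₀ (X → X → R)}
    (hs : ∀ a, s a ∈ gradeSet R ρ Φ a) (a : G) (x y : X) :
    s a x y = if Φ x y = a then (s.sum fun _ v => v) x y else 0 := by
  split_ifs with hxy
  · subst hxy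
    rw [Finsupp.sum_apply', Finsupp.sum_apply', Finsupp.sum_eq_single (Φ x y)]
    · intro b _ hb
      by_contra hne
      exact hb ((hs b).2 x y hne).symm
    · exact fun _ => rfl
  · by_contra hne
    exact hxy ((hs a).2 x y hne)

theorem existsUnique_sum_eq_of_mem_incFun [Finite X] {f : X → X → R} (hf : f ∈ IncFun ρ R) :
    ∃! s : G →₀ (X → X → R),
      (∀ a, s a ∈ gradeSubgroup R ρ Φ a) ∧ (s.sum fun _ v => v) = f := by
  have : Fintype X := Fintype.ofFinite X
  let grades : Finset G := Finset.univ.image fun p : X × X => Φ p.1 p.2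
  let part : G → X → X → R := fun a x y => if Φ x y = a then f x y else 0
  have hpart : ∀ a, part a ≠ 0 → a ∈ grades := fun a ha => by
    obtain ⟨x, y, hxy⟩ : ∃ x y, part a x y ≠ 0 := by
      by_contra! h
      exact ha (funext₂ h)
    have hΦ : Φ x y = a := by
      by_contra hΦ
      simp [part, hΦ] at hxy
    exact Finset.mem_image.mpr ⟨(x, y), Finset.mem_univ _, hΦ⟩
  refine ⟨Finsupp.onFinset grades part hpart, ⟨fun a => ?_, ?_⟩, ?_⟩
  · refine ⟨fun x y hxy => hf x y fun h => hxy ?_, fun x y hxy => ?_⟩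
    · simp [part, h]
    · by_contra hΦ
      simp [part, hΦ] at hxy
  · rw [Finsupp.onFinset_sum hpart fun _ => rfl]
    funext x y
    simp only [Finset.sum_apply, part]
    rw [Finset.sum_ite_eq, if_pos (Finset.mem_image_of_mem _ (Finset.mem_univ (x, y)))]
  · rintro s ⟨hs, hsum⟩
    ext a x y
    rw [apply_eq_ite_of_forall_mem_gradeSet hs, hsum]
    rfl

theorem exists_mul_ne_zero_of_conv_ne_zero {f g : X → X → R} {x y : X}
    (h : conv ρ f g x y ≠ 0) :
    ρ x y ∧ ∃ z, ρ x z ∧ ρ z y ∧ f x z ≠ 0 ∧ g z y ≠ 0 := by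
  unfold conv at h
  split_ifs at h with hxy
  · obtain ⟨z, ⟨hxz, hzy⟩, hfg⟩ := exists_ne_zero_of_finsum_mem_ne_zero h
    exact ⟨hxy, z, hxz, hzy, left_ne_zero_of_mul hfg, right_ne_zero_of_mul hfg⟩
  · exact absurd rfl h

theorem conv_mem_gradeSet [Mul G] (hΦ : IsRelHom ρ Φ) {a b : G} {f g : X → X → R}
    (hf : f ∈ gradeSet R ρ Φ a) (hg : g ∈ gradeSet R ρ Φ b) :
    conv ρ f g ∈ gradeSet R ρ Φ (a * b) := by
  refine ⟨fun x y h => (exists_mul_ne_zero_of_conv_ne_zero h).1, fun x y h => ?_⟩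
  obtain ⟨hxy, z, hxz, hzy, hfz, hgz⟩ := exists_mul_ne_zero_of_conv_ne_zero h
  rw [← hΦ x z y hxz hzy hxy, hf.2 x z hfz, hg.2 z y hgz]

theorem eUnit_mem_gradeSet {x y : X} (hxy : ρ x y) : eUnit R x y ∈ gradeSet R ρ Φ (Φ x y) := by
  have hsupp : ∀ p q, eUnit R x y p q ≠ 0 → p = x ∧ q = y := fun p q h => by
    by_contra hpq
    simp [eUnit, hpq] at h
  exact ⟨fun p q h => by obtain ⟨rfl, rfl⟩ := hsupp p q h; exact hxy,
    fun p q h => by obtain ⟨rfl, rfl⟩ := hsupp p q h; rfl⟩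

theorem IsRelHom.comp {Y : Type*} [Mul G] {le : Y → Y → Prop} {θ : Y → X}
    (hΦ : IsRelHom ρ Φ) (hθ : ∀ p q, le p q → ρ (θ p) (θ q)) :
    IsRelHom le fun p q => Φ (θ p) (θ q) :=
  fun _ _ _ hpq hqr hpr => hΦ _ _ _ (hθ _ _ hpq) (hθ _ _ hqr) (hθ _ _ hpr)

end Grading

section Compression

variable {X Y : Type*} (R : Type*) [Ring R] {ρ : X → X → Prop} {le : Y → Y → Prop}
  {θ : Y → X}

theorem compressMap_mem_incFun (f : X → X → R) : compressMap R le θ f ∈ IncFun le R := by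
  intro p q h
  by_contra hpq
  simp [compressMap, hpq] at h

theorem compressMap_add (f g : X → X → R) :
    compressMap R le θ (f + g) = compressMap R le θ f + compressMap R le θ g := by
  funext p q
  by_cases hpq : le p q <;> simp [compressMap, hpq]

theorem compressMap_conv (hmono : ∀ p q, le p q → ρ (θ p) (θ q))
    (hinterval : ∀ p q, le p q →
      Set.BijOn θ (RelInterval le p q) (RelInterval ρ (θ p) (θ q)))
    (f g : X → X → R) :
    compressMap R le θ (conv ρ f g) =
      conv le (compressMap R le θ f) (compressMap R le θ g) := by
  funext p q
  by_cases hpq : le p q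
  · simp only [compressMap, conv, if_pos hpq, if_pos (hmono p q hpq)]
    refine (finsum_mem_eq_of_bijOn θ (hinterval p q hpq) ?_).symm
    rintro m ⟨hpm, hmq⟩
    simp only [if_pos hpm, if_pos hmq]
  · simp [compressMap, conv, hpq]

theorem compressMap_eId (hle : ∀ p, le p p) (hθ : IsCompression ρ le θ) :
    compressMap R le θ (eId X R) = eId Y R := by
  funext p q
  by_cases hpq : p = q
  · subst hpq
    simp [compressMap, eId, hle p]
  · have hθpq : le p q → θ p ≠ θ q := fun h => (hθ.bij.mapsTo (x := (p, q)) ⟨h, hpq⟩).2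
    by_cases h : le p q <;> simp [compressMap, eId, h, hpq, hθpq]

theorem injOn_compressMap (hρ : ∀ x, ρ x x) (hθ : IsCompression ρ le θ) :
    Set.InjOn (compressMap R le θ) (IncFun ρ R) := by
  intro f hf g hg hfg
  funext x y
  by_cases hxy : ρ x y
  · obtain ⟨p, -, q, -, -, hpq, rfl, -, rfl⟩ := hθ.lift x y y hxy (hρ y) hxy
    simpa [compressMap, hpq] using congrFun (congrFun hfg p) q
  · rw [of_not_not (mt (hf x y) hxy), of_not_not (mt (hg x y) hxy)]

theorem compressMap_mem_gradeSet {G : Type*} {Φ : X → X → G} {a : G} {f : X → X → R}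
    (hf : f ∈ gradeSet R ρ Φ a) :
    compressMap R le θ f ∈ gradeSet R le (fun p q => Φ (θ p) (θ q)) a := by
  refine ⟨compressMap_mem_incFun R f, fun p q h => hf.2 _ _ ?_⟩
  by_contra hf0
  simp [compressMap, hf0] at h

end Compression

section StableRelation

variable {X : Type*} {ρ : X → X → Prop}

def StrictTriple (ρ : X → X → Prop) (w x y : X) : Prop :=
  w ≠ x ∧ y ≠ x ∧ TransTriple ρ w x y

theorem RelStable.eq_of_isClasp (hst : RelStable ρ) {x w : X} (hx : IsClasp ρ x)
    (hxw : ρ x w) (hwx : ρ w x) : w = x := by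
  by_contra hwx'
  obtain ⟨p, q, hpx, hqx, hpρ, hρq, hpq⟩ := hx
  have hpw : ρ p w := (hst.1.2 p x w x hpρ hxw hwx hpρ).mpr (hst.1.1 x)
  have hwq : ρ w q := (hst.1.2 x w x q hxw hwx hρq hρq).mp (hst.1.1 x)
  have hpw' : p ≠ w := by rintro rfl; exact hpq hwq
  have hwq' : w ≠ q := by rintro rfl; exact hpq hpw
  have hpq' : p ≠ q := by rintro rfl; exact hpq (hst.1.1 p)
  exact hpq (hst.2 p x w q hpx hpw' hpq' (Ne.symm hwx') (Ne.symm hqx) hwq'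
    hpρ hpw hxw hρq hwq)

theorem RelStable.not_isClasp_of_rel_of_rel (hst : RelStable ρ) {a b : X} (hab : a ≠ b)
    (rab : ρ a b) (rba : ρ b a) : ¬ IsClasp ρ a :=
  fun ha => hab (hst.eq_of_isClasp ha rab rba).symm

theorem RelStable.strictTriple_congr_right (hst : RelStable ρ) {a b c : X}
    (ha : IsClasp ρ a) (hab : a ≠ b) (hac : a ≠ c) (hbc : b ≠ c)
    (habc : TransTriple ρ a b c) (w : X) :
    StrictTriple ρ w a b ↔ StrictTriple ρ w a c := by
  obtain ⟨rab, rbc, rac⟩ := habc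
  constructor
  · rintro ⟨hwa, -, rwa, -, rwb⟩
    have hwb : w ≠ b := by rintro rfl; exact hab (hst.eq_of_isClasp ha rab rwa).symm
    have hwc : w ≠ c := by rintro rfl; exact hac (hst.eq_of_isClasp ha rac rwa).symm
    exact ⟨hwa, Ne.symm hac, rwa, rac, hst.2 w a b c hwa hwb hwc hab hac hbc rwa rwb rab rac rbc⟩
  · rintro ⟨hwa, -, rwa, -, rwc⟩
    exact ⟨hwa, Ne.symm hab, rwa, rab, (hst.1.2 w a b c rwa rab rbc rwc).mpr rac⟩

theorem RelStable.strictTriple_congr_left (hst : RelStable ρ) {a b c : X}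
    (hc : IsClasp ρ c) (hab : a ≠ b) (hac : a ≠ c) (hbc : b ≠ c)
    (habc : TransTriple ρ a b c) (y : X) :
    StrictTriple ρ a c y ↔ StrictTriple ρ b c y := by
  obtain ⟨rab, rbc, rac⟩ := habc
  constructor
  · rintro ⟨-, hyc, -, rcy, ray⟩
    exact ⟨hbc, hyc, rbc, rcy, (hst.1.2 a b c y rab rbc rcy ray).mp rac⟩
  · rintro ⟨-, hyc, -, rcy, rby⟩
    have hay : a ≠ y := by rintro rfl; exact hac (hst.eq_of_isClasp hc rcy rac)
    have hby : b ≠ y := by rintro rfl; exact hbc (hst.eq_of_isClasp hc rcy rbc)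
    exact ⟨hac, hyc, rac, rcy, hst.2 a b c y hab hac hay hbc hby (Ne.symm hyc) rab rac rbc rby rcy⟩

theorem strictTriple_of_not_isLockedClasp {x a c w z : X} (hx : ¬ IsLockedClasp ρ x)
    (hac : StrictTriple ρ a x c) (hwc : StrictTriple ρ w x c) (hwz : StrictTriple ρ w x z) :
    StrictTriple ρ a x z := by
  obtain ⟨hax, hcx, rax, rxc, rac⟩ := hac
  obtain ⟨hwx, -, rwx, -, rwc⟩ := hwc
  obtain ⟨-, hzx, -, rxz, rwz⟩ := hwz
  refine ⟨hax, hzx, rax, rxz, ?_⟩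
  by_contra haz
  exact hx ⟨w, c, a, z, hwx, hcx, hax, hzx, haz, ⟨rwx, rxz, rwz⟩, ⟨rwx, rxc, rwc⟩,
    ⟨rax, rxc, rac⟩⟩

end StableRelation

section Copies

variable {X : Type*} (ρ : X → X → Prop) {Z : Type} (e : X ≃ Z)

/-- Points of `X` are coded in `Z : Type` so that the carrier lives in `Type`; a point has one
copy for each label, except that a non-clasp has the single label `none`. -/
def Copies : Type :=
  {p : Z × Option (Set Z) // IsClasp ρ (e.symm p.1) ∨ p.2 = none}

instance [Finite Z] : Finite (Copies ρ e) := by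
  unfold Copies
  infer_instance

variable {ρ e}

def Copies.base (p : Copies ρ e) : X :=
  e.symm p.1.1

variable (ρ e)

noncomputable def copy (x : X) (l : Option (Set Z)) : Copies ρ e :=
  ⟨(e x, if IsClasp ρ x then l else none), by by_cases hx : IsClasp ρ x <;> simp [hx]⟩

/-- The union over `w` is the common label of the `tgtCopy ρ e w a` (`tgtCopy_eq_srcCopy`). -/
noncomputable def srcCopy (a b : X) : Copies ρ e :=
  copy ρ e a <| if ∃ w, StrictTriple ρ w a b then
    some {z | ∃ w, StrictTriple ρ w a b ∧ StrictTriple ρ w a (e.symm z)} else none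

noncomputable def tgtCopy (a b : X) : Copies ρ e :=
  copy ρ e b (some {z | StrictTriple ρ a b (e.symm z)})

variable {ρ e}

@[simp]
theorem base_copy (x : X) (l : Option (Set Z)) : (copy ρ e x l).base = x := by
  simp [Copies.base, copy]

@[simp]
theorem base_srcCopy (a b : X) : (srcCopy ρ e a b).base = a :=
  base_copy _ _

@[simp]
theorem base_tgtCopy (a b : X) : (tgtCopy ρ e a b).base = b :=
  base_copy _ _

theorem copy_of_not_isClasp {x : X} (hx : ¬ IsClasp ρ x) (l l' : Option (Set Z)) :
    copy ρ e x l = copy ρ e x l' :=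
  Subtype.ext (by simp [copy, hx])

theorem label_eq_of_copy_eq {x : X} (hx : IsClasp ρ x) {l l' : Option (Set Z)}
    (h : copy ρ e x l = copy ρ e x l') : l = l' := by
  simpa [copy, hx] using congrArg (fun p : Copies ρ e => p.1.2) h

theorem eq_of_base_eq_of_not_isClasp {p q : Copies ρ e} (hp : ¬ IsClasp ρ p.base)
    (hpq : p.base = q.base) : p = q := by
  obtain ⟨⟨i, l⟩, hl⟩ := p
  obtain ⟨⟨j, l'⟩, hl'⟩ := q
  have hij : i = j := e.symm.injective hpq
  subst hij
  have hl : l = none := hl.resolve_left hp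
  have hl' : l' = none := hl'.resolve_left hp
  subst hl hl'
  rfl

theorem srcCopy_congr (hst : RelStable ρ) {a b c : X} (hab : a ≠ b) (hac : a ≠ c)
    (hbc : b ≠ c) (habc : TransTriple ρ a b c) : srcCopy ρ e a b = srcCopy ρ e a c := by
  by_cases ha : IsClasp ρ a
  · simp only [srcCopy, hst.strictTriple_congr_right ha hab hac hbc habc]
  · exact copy_of_not_isClasp ha _ _

theorem tgtCopy_congr (hst : RelStable ρ) {a b c : X} (hab : a ≠ b) (hac : a ≠ c)
    (hbc : b ≠ c) (habc : TransTriple ρ a b c) : tgtCopy ρ e a c = tgtCopy ρ e b c := by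
  by_cases hc : IsClasp ρ c
  · simp only [tgtCopy, hst.strictTriple_congr_left hc hab hac hbc habc]
  · exact copy_of_not_isClasp hc _ _

theorem tgtCopy_eq_srcCopy (hunl : ∀ x, IsClasp ρ x → ¬ IsLockedClasp ρ x) {a b c : X}
    (habc : StrictTriple ρ a b c) : tgtCopy ρ e a b = srcCopy ρ e b c := by
  by_cases hb : IsClasp ρ b
  · have hw : ∃ w, StrictTriple ρ w b c := ⟨a, habc⟩
    simp only [tgtCopy, srcCopy, if_pos hw]
    congr 2
    ext z
    exact ⟨fun hz => ⟨a, habc, hz⟩, fun ⟨w, hwc, hwz⟩ =>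
      strictTriple_of_not_isLockedClasp (hunl b hb) habc hwc hwz⟩
  · exact copy_of_not_isClasp hb _ _

theorem rel_of_tgtCopy_eq_srcCopy {a b c : X} (hab : a ≠ b) (hbc : b ≠ c) (rab : ρ a b)
    (rbc : ρ b c) (h : tgtCopy ρ e a b = srcCopy ρ e b c) : ρ a c := by
  by_contra hac
  have hb : IsClasp ρ b := ⟨a, c, hab, Ne.symm hbc, rab, rbc, hac⟩
  have hl := label_eq_of_copy_eq hb h
  split_ifs at hl with hw
  obtain ⟨w, hw⟩ := hw
  have hc : e c ∈ {z | ∃ w, StrictTriple ρ w b c ∧ StrictTriple ρ w b (e.symm z)} :=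
    ⟨w, hw, by simpa using hw⟩
  rw [← Option.some_inj.mp hl] at hc
  have habc : StrictTriple ρ a b c := by simpa using hc
  exact hac habc.2.2.2.2

end Copies

section CopyLE

variable {X : Type*} (ρ : X → X → Prop) {Z : Type} (e : X ≃ Z)

def CopyLE (p q : Copies ρ e) : Prop :=
  p = q ∨ ∃ a b, a ≠ b ∧ ρ a b ∧ p = srcCopy ρ e a b ∧ q = tgtCopy ρ e a b

theorem copyLE_refl (p : Copies ρ e) : CopyLE ρ e p p :=
  Or.inl rfl

variable {ρ e}

theorem copyLE_srcCopy_tgtCopy {a b : X} (hab : a ≠ b) (rab : ρ a b) :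
    CopyLE ρ e (srcCopy ρ e a b) (tgtCopy ρ e a b) :=
  Or.inr ⟨a, b, hab, rab, rfl, rfl⟩

theorem CopyLE.eq_srcCopy_tgtCopy {p q : Copies ρ e} (h : CopyLE ρ e p q) (hpq : p ≠ q) :
    p.base ≠ q.base ∧ ρ p.base q.base ∧
      p = srcCopy ρ e p.base q.base ∧ q = tgtCopy ρ e p.base q.base := by
  rcases h with h | ⟨a, b, hab, rab, rfl, rfl⟩
  · exact absurd h hpq
  · simpa using ⟨hab, rab⟩

theorem CopyLE.rel_base (hρ : ∀ x, ρ x x) {p q : Copies ρ e} (h : CopyLE ρ e p q) :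
    ρ p.base q.base := by
  rcases eq_or_ne p q with rfl | hpq
  · exact hρ _
  · exact (h.eq_srcCopy_tgtCopy hpq).2.1

theorem copyLE_trans (hst : RelStable ρ) {p q r : Copies ρ e} (hpq : CopyLE ρ e p q) (hqr : CopyLE ρ e q r) : CopyLE ρ e p r := by
  rcases hpq with rfl | ⟨a, b, hab, rab, rfl, rfl⟩
  · exact hqr
  rcases hqr with rfl | ⟨b', c, hbc, rbc, hq, rfl⟩
  · exact copyLE_srcCopy_tgtCopy hab rab
  obtain rfl : b = b' := by simpa using congrArg Copies.base hq
  have rac := rel_of_tgtCopy_eq_srcCopy hab hbc rab rbc hq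
  rcases eq_or_ne a c with rfl | hac
  · exact Or.inl (copy_of_not_isClasp (hst.not_isClasp_of_rel_of_rel hab rab rbc) _ _)
  · exact Or.inr ⟨a, c, hac, rac, srcCopy_congr hst hab hac hbc ⟨rab, rbc, rac⟩,
      (tgtCopy_congr hst hab hac hbc ⟨rab, rbc, rac⟩).symm⟩

theorem eq_of_copyLE_of_copyLE_of_base_eq {p m m' : Copies ρ e} (hm : CopyLE ρ e p m)
    (hm' : CopyLE ρ e p m') (hbase : m.base = m'.base) : m = m' := by
  rcases eq_or_ne p m with rfl | hpm <;> rcases eq_or_ne p m' with rfl | hpm'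
  · rfl
  · exact absurd hbase (hm'.eq_srcCopy_tgtCopy hpm').1
  · exact absurd hbase.symm (hm.eq_srcCopy_tgtCopy hpm).1
  · rw [(hm.eq_srcCopy_tgtCopy hpm).2.2.2, (hm'.eq_srcCopy_tgtCopy hpm').2.2.2, hbase]

theorem surjOn_base_interval (hst : RelStable ρ)
    (hunl : ∀ x, IsClasp ρ x → ¬ IsLockedClasp ρ x) {p q : Copies ρ e}
    (hpq : CopyLE ρ e p q) :
    Set.SurjOn Copies.base (RelInterval (CopyLE ρ e) p q) (RelInterval ρ p.base q.base) := by
  rintro b ⟨rab, rbc⟩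
  rcases hpq with rfl | ⟨a, c, hac, rac, rfl, rfl⟩
  · rcases eq_or_ne p.base b with hb | hab
    · exact ⟨p, ⟨copyLE_refl ρ e p, copyLE_refl ρ e p⟩, hb⟩
    -- `p.base` and `b` form a 2-cycle, so both have a single copy
    set a := p.base
    have ha := hst.not_isClasp_of_rel_of_rel hab rab rbc
    have hb := hst.not_isClasp_of_rel_of_rel (Ne.symm hab) rbc rab
    have h₁ : p = srcCopy ρ e a b := eq_of_base_eq_of_not_isClasp ha (by simp [a])
    have h₂ : tgtCopy ρ e a b = srcCopy ρ e b a :=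
      eq_of_base_eq_of_not_isClasp (by simpa using hb) (by simp)
    have h₃ : tgtCopy ρ e b a = p := eq_of_base_eq_of_not_isClasp (by simpa using ha) (by simp [a])
    refine ⟨tgtCopy ρ e a b, ⟨?_, ?_⟩, base_tgtCopy _ _⟩
    · rw [h₁]
      exact copyLE_srcCopy_tgtCopy hab rab
    · rw [h₂, ← h₃]
      exact copyLE_srcCopy_tgtCopy (Ne.symm hab) rbc
  · simp only [base_srcCopy, base_tgtCopy] at rab rbc ⊢
    rcases eq_or_ne a b with rfl | hab
    · exact ⟨_, ⟨copyLE_refl ρ e _, copyLE_srcCopy_tgtCopy hac rac⟩, base_srcCopy _ _⟩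
    rcases eq_or_ne b c with rfl | hbc
    · exact ⟨_, ⟨copyLE_srcCopy_tgtCopy hac rac, copyLE_refl ρ e _⟩, base_tgtCopy _ _⟩
    have habc : TransTriple ρ a b c := ⟨rab, rbc, rac⟩
    refine ⟨tgtCopy ρ e a b, ⟨?_, ?_⟩, base_tgtCopy _ _⟩
    · rw [← srcCopy_congr hst hab hac hbc habc]
      exact copyLE_srcCopy_tgtCopy hab rab
    · rw [tgtCopy_congr hst hab hac hbc habc,
        tgtCopy_eq_srcCopy hunl ⟨hab, Ne.symm hbc, habc⟩]
      exact copyLE_srcCopy_tgtCopy hbc rbc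

theorem bijOn_base_interval (hst : RelStable ρ)
    (hunl : ∀ x, IsClasp ρ x → ¬ IsLockedClasp ρ x) {p q : Copies ρ e}
    (hpq : CopyLE ρ e p q) :
    Set.BijOn Copies.base (RelInterval (CopyLE ρ e) p q) (RelInterval ρ p.base q.base) :=
  ⟨fun _ hm => ⟨hm.1.rel_base hst.1.1, hm.2.rel_base hst.1.1⟩,
    fun _ hm _ hm' => eq_of_copyLE_of_copyLE_of_base_eq hm.1 hm'.1,
    surjOn_base_interval hst hunl hpq⟩

theorem exists_copyLE_of_rel {a b : X} (rab : ρ a b) :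
    ∃ p q : Copies ρ e, CopyLE ρ e p q ∧ p.base = a ∧ q.base = b := by
  rcases eq_or_ne a b with rfl | hab
  · exact ⟨copy ρ e a none, _, copyLE_refl ρ e _, base_copy _ _, base_copy _ _⟩
  · exact ⟨_, _, copyLE_srcCopy_tgtCopy hab rab, base_srcCopy _ _, base_tgtCopy _ _⟩

theorem bijOn_base_strict :
    Set.BijOn (fun pq : Copies ρ e × Copies ρ e => (pq.1.base, pq.2.base))
      {pq | CopyLE ρ e pq.1 pq.2 ∧ pq.1 ≠ pq.2} {ab | ρ ab.1 ab.2 ∧ ab.1 ≠ ab.2} := by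
  refine ⟨?_, ?_, ?_⟩
  · rintro ⟨p, q⟩ ⟨hpq, hne⟩
    obtain ⟨hbase, rbase, -⟩ := hpq.eq_srcCopy_tgtCopy hne
    exact ⟨rbase, hbase⟩
  · rintro ⟨p, q⟩ ⟨hpq, hne⟩ ⟨p', q'⟩ ⟨hpq', hne'⟩ hbase
    dsimp only at hpq hne hpq' hne'
    obtain ⟨-, -, hp, hq⟩ := hpq.eq_srcCopy_tgtCopy hne
    obtain ⟨-, -, hp', hq'⟩ := hpq'.eq_srcCopy_tgtCopy hne'
    simp only [Prod.mk.injEq] at hbase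
    rw [Prod.mk.injEq, hp, hq, hp', hq', hbase.1, hbase.2]
    exact ⟨rfl, rfl⟩
  · rintro ⟨a, b⟩ ⟨rab, hab⟩
    refine ⟨(srcCopy ρ e a b, tgtCopy ρ e a b), ⟨copyLE_srcCopy_tgtCopy hab rab, ?_⟩, by simp⟩
    exact fun h => hab (by simpa using congrArg Copies.base h)

theorem isCompression_base (hst : RelStable ρ)
    (hunl : ∀ x, IsClasp ρ x → ¬ IsLockedClasp ρ x) :
    IsCompression ρ (CopyLE ρ e) Copies.base where
  surj a := ⟨copy ρ e a none, base_copy _ _⟩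
  mono _ _ h := h.rel_base hst.1.1
  lift a₁ a₂ a₃ r₁₂ r₂₃ r₁₃ := by
    obtain ⟨p, q, hpq, rfl, rfl⟩ := exists_copyLE_of_rel (e := e) r₁₃
    obtain ⟨m, ⟨hpm, hmq⟩, rfl⟩ := surjOn_base_interval hst hunl hpq ⟨r₁₂, r₂₃⟩
    exact ⟨p, m, q, hpm, hmq, hpq, rfl, rfl, rfl⟩
  bij := bijOn_base_strict

end CopyLE

/-- for a stable relation with all clasps unlocked on a finite
set `X` and a grading of `I(X,ρ,R)` induced by a homomorphism `Φ : ρ → G`,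
there is a preorder `≤` on a finite set `Y`, a good `G`-grading of `I(Y,≤,R)`
with components `T_a`, and an injective ring homomorphism
`h : I(X,ρ,R) → I(Y,≤,R)` with `h(S_a) ⊆ T_a` for all `a`. -/
theorem stable_graded_embeds_in_preorder_incidence {X : Type*} (R : Type*)
    [Ring R] [Finite X] {G : Type*} [Semigroup G] (ρ : X → X → Prop)
    (hstable : RelStable ρ)
    (hclasp : ∀ x : X, IsClasp ρ x → ¬ IsLockedClasp ρ x)
    (Φ : X → X → G) (hΦ : IsRelHom ρ Φ) :
    ∃ (Y : Type) (le : Y → Y → Prop) (θ : Y → X)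
      (T : G → AddSubgroup (Y → Y → R))
      (h : (X → X → R) → (Y → Y → R)),
      Finite Y ∧
      (∀ y, le y y) ∧ (∀ a b c, le a b → le b c → le a c) ∧
      IsCompression ρ le θ ∧
      (∀ a : G, (T a : Set (Y → Y → R)) ⊆ IncFun le R) ∧
      (∀ f ∈ IncFun le R, ∃! s : G →₀ (Y → Y → R),
          (∀ a, s a ∈ T a) ∧ (s.sum fun _ v => v) = f) ∧
      (∀ a b : G, ∀ f ∈ T a, ∀ g ∈ T b, conv le f g ∈ T (a * b)) ∧
      (∀ x y, le x y → ∃ a : G, eUnit R x y ∈ T a) ∧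
      (∀ f ∈ IncFun ρ R, h f ∈ IncFun le R) ∧
      (∀ f ∈ IncFun ρ R, ∀ g ∈ IncFun ρ R, h (f + g) = h f + h g) ∧
      (∀ f ∈ IncFun ρ R, ∀ g ∈ IncFun ρ R, h (conv ρ f g) = conv le (h f) (h g)) ∧
      h (eId X R) = eId Y R ∧
      Set.InjOn h (IncFun ρ R) ∧
      (∀ a : G, ∀ f ∈ gradeSet R ρ Φ a, h f ∈ T a) := by
  let e := Finite.equivFin X
  have hθ : IsCompression ρ (CopyLE ρ e) Copies.base := isCompression_base hstable hclasp
  exact ⟨Copies ρ e, CopyLE ρ e, Copies.base,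
    gradeSubgroup R (CopyLE ρ e) fun p q => Φ p.base q.base,
    compressMap R (CopyLE ρ e) Copies.base,
    inferInstance,
    copyLE_refl ρ e,
    fun _ _ _ => copyLE_trans hstable,
    hθ,
    coe_gradeSubgroup_subset_incFun,
    fun _ hf => existsUnique_sum_eq_of_mem_incFun hf,
    fun _ _ _ hf _ hg => conv_mem_gradeSet (hΦ.comp hθ.mono) hf hg,
    fun _ _ hpq => ⟨_, eUnit_mem_gradeSet hpq⟩,
    fun f _ => compressMap_mem_incFun R f,
    fun f _ g _ => compressMap_add R f g,
    fun f _ g _ => compressMap_conv R hθ.mono (fun _ _ => bijOn_base_interval hstable hclasp) f g,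
    compressMap_eId R (copyLE_refl ρ e) hθ,
    injOn_compressMap R hstable.1.1 hθ,
    fun _ _ hf => compressMap_mem_gradeSet R hf⟩
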